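/- arXiv:2508.21226 — 2 statements merged into one kernel-verified Lean document; each statement's English description precedes it below -/
import Mathlib

section
/- Let a ∈ ℝ^m, b > 0, and a^c the componentwise positive part of a with ‖a^c‖² > 0. Then θ* = (b/‖a^c‖²)·a^c is the unique minimizer of θᵀθ over {θ : aᵀθ ≥ b, θ ≥ 0}. -/
open Finset

theorem relaxed_knapsack_optimal
    (m : ℕ) (a : Fin m → ℝ) (b : ℝ) (hb : 0 < b)
    (ac : Fin m → ℝ) (hac : ∀ j, ac j = max (a j) 0)
    (hpos : 0 < ∑ j, ac j * ac j)
    (θstar : Fin m → ℝ)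
    (hθstar : θstar = fun j => (b / ∑ j, ac j * ac j) * ac j) :
    (b ≤ ∑ j, a j * θstar j ∧ ∀ j, 0 ≤ θstar j) ∧
      ∀ θ : Fin m → ℝ, (b ≤ ∑ j, a j * θ j ∧ ∀ j, 0 ≤ θ j) → θ ≠ θstar →
        ∑ j, θstar j * θstar j < ∑ j, θ j * θ j := by
  set S := ∑ j, ac j * ac j with hS
  have hacnn : ∀ j, 0 ≤ ac j := fun j => (hac j) ▸ le_max_right _ _
  have hacge : ∀ j, a j ≤ ac j := fun j => (hac j) ▸ le_max_left _ _
  have key : ∀ j, a j * ac j = ac j * ac j := by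
    intro j
    rcases le_total (a j) 0 with h | h
    · rw [hac j, max_eq_right h]; ring
    · rw [hac j, max_eq_left h]
  have hfeas : ∑ j, a j * θstar j = b := by
    subst hθstar
    have h1 : ∀ j ∈ Finset.univ (α := Fin m),
        a j * ((b / S) * ac j) = (b / S) * (ac j * ac j) := by
      intro j _
      rw [show a j * ((b / S) * ac j) = (b / S) * (a j * ac j) by ring, key j]
    rw [Finset.sum_congr rfl h1, ← Finset.mul_sum, ← hS]
    field_simp
  have hnn : ∀ j, 0 ≤ θstar j := by
    intro j
    rw [hθstar]
    exact mul_nonneg (div_nonneg hb.le hpos.le) (hacnn j)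
  have hstar2 : ∑ j, θstar j * θstar j = b * b / S := by
    subst hθstar
    have h1 : ∀ j ∈ Finset.univ (α := Fin m),
        ((b / S) * ac j) * ((b / S) * ac j) = (b / S) * (b / S) * (ac j * ac j) := by
      intro j _; ring
    rw [Finset.sum_congr rfl h1, ← Finset.mul_sum, ← hS]
    field_simp
  refine ⟨⟨hfeas.ge, hnn⟩, ?_⟩
  rintro θ ⟨hθb, hθpos⟩ hne
  -- ∑ θstar θ ≥ b²/S
  have hcross : b * b / S ≤ ∑ j, θstar j * θ j := by
    have h1 : ∑ j, θstar j * θ j = (b / S) * ∑ j, ac j * θ j := by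
      rw [hθstar, Finset.mul_sum]
      exact Finset.sum_congr rfl fun j _ => by ring
    have h2 : ∑ j, a j * θ j ≤ ∑ j, ac j * θ j :=
      Finset.sum_le_sum fun j _ => mul_le_mul_of_nonneg_right (hacge j) (hθpos j)
    have h3 : b ≤ ∑ j, ac j * θ j := le_trans hθb h2
    have h4 : (b / S) * b ≤ (b / S) * ∑ j, ac j * θ j :=
      mul_le_mul_of_nonneg_left h3 (div_nonneg hb.le hpos.le)
    rw [h1]
    calc b * b / S = (b / S) * b := by ring
    _ ≤ _ := h4
  have hdiffpos : 0 < ∑ j, (θ j - θstar j) ^ 2 := by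
    obtain ⟨j, hj⟩ := Function.ne_iff.mp hne
    exact Finset.sum_pos' (fun i _ => sq_nonneg _)
      ⟨j, Finset.mem_univ j, by
        have := sub_ne_zero.mpr hj
        positivity⟩
  have hexpand : ∑ j, (θ j - θstar j) ^ 2 =
      ∑ j, θ j * θ j - 2 * ∑ j, θstar j * θ j + ∑ j, θstar j * θstar j := by
    have h : ∀ j ∈ Finset.univ (α := Fin m), (θ j - θstar j) ^ 2 =
        θ j * θ j - 2 * (θstar j * θ j) + θstar j * θstar j := fun j _ => by ring
    rw [Finset.sum_congr rfl h, Finset.sum_add_distrib, Finset.sum_sub_distrib,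
      ← Finset.mul_sum]
  have h5 : ∑ j, θstar j * θstar j ≤ ∑ j, θstar j * θ j := hstar2 ▸ hcross
  linarith
end

section
/- Fix i and let r^H, r^L, u be the scalar values (e.g. the density component of vectors in ℝ^v) of the high-order residual, low-order residual and state; let M > 0, Δt > 0, α ∈ [0,1]. Define for a scalar ℓ ∈ [0,1] the blended update u⁺(ℓ) = u - (Δt/M)((1-ℓ) r^H + ℓ r^L). If u - (Δt/M) r^L ≥ 0 and ℓ ≥ ℓ^c, where ℓ^c = 1 - ((1-α)/Δt)·(M u - Δt r^L)/(r^H - r^L) when r^H - r^L > 0 and ℓ^c = 0 otherwise, then u⁺(ℓ) ≥ α(u - (Δt/M) r^L). -/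
theorem relative_positivity_limiting
    (rH rL u M Δt α : ℝ)
    (hM : 0 < M) (hΔt : 0 < Δt) (hα0 : 0 ≤ α) (hα1 : α ≤ 1)
    (hL : 0 ≤ u - (Δt / M) * rL)
    (ℓc : ℝ)
    (hℓc : ℓc = if rH - rL > 0
      then 1 - ((1 - α) / Δt) * ((M * u - Δt * rL) / (rH - rL))
      else 0)
    (ℓ : ℝ) (hℓ0 : 0 ≤ ℓ) (hℓ1 : ℓ ≤ 1) (hℓ : ℓc ≤ ℓ) :
    α * (u - (Δt / M) * rL) ≤ u - (Δt / M) * ((1 - ℓ) * rH + ℓ * rL) := by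
  have hM' := hM.ne'
  by_cases hd : rH - rL > 0
  · rw [if_pos hd] at hℓc
    subst hℓc
    have h2 : 1 - ℓ ≤ (1 - α) * (M * u - Δt * rL) / (rH - rL) / Δt := by
      have e : (1 - α) * (M * u - Δt * rL) / (rH - rL) / Δt
          = (1 - α) / Δt * ((M * u - Δt * rL) / (rH - rL)) := by ring
      rw [e]; linarith
    rw [le_div_iff₀ hΔt, le_div_iff₀ hd] at h2
    have h1 : (1 - ℓ) * (rH - rL) * Δt ≤ (1 - α) * (M * u - Δt * rL) := by nlinarith [h2]
    rw [← sub_nonneg]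
    have : u - Δt / M * ((1 - ℓ) * rH + ℓ * rL) - α * (u - Δt / M * rL)
        = ((1 - α) * (M * u - Δt * rL) - (1 - ℓ) * (rH - rL) * Δt) / M := by
      field_simp; ring
    rw [this]
    exact div_nonneg (by linarith) hM.le
  · rw [if_neg hd] at hℓc
    push_neg at hd
    have h1 : (1 - ℓ) * (rH - rL) ≤ 0 := mul_nonpos_of_nonneg_of_nonpos (by linarith) (by linarith)
    have h2 : 0 ≤ (1 - α) * (u - Δt / M * rL) := mul_nonneg (by linarith) hL
    have hdt : 0 < Δt / M := div_pos hΔt hM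
    nlinarith [mul_nonneg hdt.le (neg_nonneg.mpr h1)]
end
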